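/- If X and Y are random variables taking values in a finite set, A is an event with P(Y ∈ A) > 0, then the total variation distance between the conditional laws satisfies d_TV(Law(X | X ∈ A), Law(Y | Y ∈ A)) ≤ 2·d_TV(Law(X), Law(Y)) / P(Y ∈ A). -/

import Mathlib

/-- For probability mass functions μ, ν on a finite set and an event A with
ν(A) > 0, the total variation distance of the conditional laws satisfies
d_TV(μ(·|A), ν(·|A)) ≤ 2·d_TV(μ,ν)/ν(A). -/
theorem tv_conditional_bound {S : Type*} [Fintype S] [DecidableEq S] (μ ν : S → ℝ) (A : Finset S)
    (hμ0 : ∀ s, 0 ≤ μ s) (hν0 : ∀ s, 0 ≤ ν s)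
    (hμ1 : ∑ s, μ s = 1) (hν1 : ∑ s, ν s = 1)
    (hμA : 0 < ∑ a ∈ A, μ a) (hνA : 0 < ∑ a ∈ A, ν a) :
    (1 / 2) * ∑ s, |(if s ∈ A then μ s / ∑ a ∈ A, μ a else 0)
        - (if s ∈ A then ν s / ∑ a ∈ A, ν a else 0)|
      ≤ 2 * ((1 / 2) * ∑ s, |μ s - ν s|) / ∑ a ∈ A, ν a := by
  set Mμ := ∑ a ∈ A, μ a with hMμ
  set Mν := ∑ a ∈ A, ν a with hMν
  set T := ∑ s, |μ s - ν s| with hT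
  have hX : ∑ a ∈ A, |μ a - ν a| ≤ T :=
    Finset.sum_le_sum_of_subset_of_nonneg (Finset.subset_univ A)
      (fun _ _ _ => abs_nonneg _)
  have hMdiff : |Mν - Mμ| ≤ ∑ a ∈ A, |μ a - ν a| := by
    rw [hMμ, hMν, ← Finset.sum_sub_distrib]
    calc |∑ a ∈ A, (ν a - μ a)| ≤ ∑ a ∈ A, |ν a - μ a| := Finset.abs_sum_le_sum_abs _ _
      _ = ∑ a ∈ A, |μ a - ν a| := by simp [abs_sub_comm]
  have hsum : ∑ s, |(if s ∈ A then μ s / Mμ else 0) - (if s ∈ A then ν s / Mν else 0)|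
      = ∑ s ∈ A, |μ s / Mμ - ν s / Mν| := by
    rw [← Finset.sum_subset (Finset.subset_univ A) (fun s _ hs => by simp [hs])]
    exact Finset.sum_congr rfl (fun s hs => by simp [hs])
  rw [hsum]
  have key : ∀ s ∈ A, |μ s / Mμ - ν s / Mν|
      ≤ |μ s - ν s| / Mν + μ s / Mμ * (|Mν - Mμ| / Mν) := by
    intro s _
    have h1 : μ s / Mμ - ν s / Mν = (μ s - ν s) / Mν + μ s / Mμ * ((Mν - Mμ) / Mν) := by
      field_simp
      ring
    rw [h1]
    calc |(μ s - ν s) / Mν + μ s / Mμ * ((Mν - Mμ) / Mν)|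
        ≤ |(μ s - ν s) / Mν| + |μ s / Mμ * ((Mν - Mμ) / Mν)| := abs_add_le _ _
      _ = |μ s - ν s| / Mν + μ s / Mμ * (|Mν - Mμ| / Mν) := by
          rw [abs_div, abs_mul, abs_div, abs_div, abs_of_pos hνA, abs_of_pos hμA,
            abs_of_nonneg (hμ0 s)]
  have hsplit : ∑ s ∈ A, |μ s / Mμ - ν s / Mν|
      ≤ (∑ a ∈ A, |μ a - ν a|) / Mν + |Mν - Mμ| / Mν := by
    calc ∑ s ∈ A, |μ s / Mμ - ν s / Mν|
        ≤ ∑ s ∈ A, (|μ s - ν s| / Mν + μ s / Mμ * (|Mν - Mμ| / Mν)) :=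
          Finset.sum_le_sum key
      _ = (∑ a ∈ A, |μ a - ν a|) / Mν + (∑ a ∈ A, μ a) / Mμ * (|Mν - Mμ| / Mν) := by
          rw [Finset.sum_add_distrib, ← Finset.sum_div, ← Finset.sum_mul, ← Finset.sum_div]
      _ = (∑ a ∈ A, |μ a - ν a|) / Mν + |Mν - Mμ| / Mν := by
          rw [← hMμ, div_self hμA.ne', one_mul]
  have hbound : ∑ s ∈ A, |μ s / Mμ - ν s / Mν| ≤ 2 * T / Mν := by
    refine hsplit.trans ?_
    rw [← add_div]
    gcongr
    linarith [hMdiff.trans hX, hX]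
  calc (1 / 2 : ℝ) * ∑ s ∈ A, |μ s / Mμ - ν s / Mν|
      ≤ (1 / 2) * (2 * T / Mν) := by
        have h2 : (0:ℝ) ≤ 1/2 := by norm_num
        exact mul_le_mul_of_nonneg_left hbound h2
    _ = 2 * ((1 / 2) * T) / Mν := by ring
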